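/- arXiv:1402.0124 — 7 statements merged into one kernel-verified Lean document; each statement's English description precedes it below -/
import Mathlib

section
/- Let I be a nonempty index set and for each i ∈ I let F_i be a free group and θ_i : ℤ/2 → Aut(F_i) a homomorphism, forming the semidirect product F_i ⋊_{θ_i} ℤ/2. Then the free product ∗_{i∈I}(F_i ⋊_{θ_i} ℤ/2) is isomorphic to F ⋊_θ ℤ/2 for some free group F and some homomorphism θ : ℤ/2 → Aut(F); that is, there exist a type X, a homomorphism θ : ℤ/2 → Aut(FreeGroup X), and a group isomorphism ∗_{i∈I}(F_i ⋊_{θ_i} ℤ/2) ≅ (FreeGroup X) ⋊_θ ℤ/2. -/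
/-!
Fix `i₀ ∈ I` and write `t_i` for the involution of the `i`-th factor. The `F_i` and the elements
`c_i = t_{i₀} t_i` (`i ≠ i₀`) generate the kernel of the map onto `ℤ/2`; it is the free product
`∗ F_i ∗ F({i ≠ i₀})`, hence free, and `t_{i₀}` splits it off. Conjugation by `t_{i₀}` acts on it
by `θ_{i₀}` on `F_{i₀}`, by `x ↦ c_i θ_i(x) c_i⁻¹` on `F_i`, and by `c_i ↦ c_i⁻¹`.
-/

open Monoid SemidirectProduct
open scoped Monoid.Coprod

local notation "C₂" => Multiplicative (ZMod 2)

namespace C2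

def gen : C₂ := Multiplicative.ofAdd 1

lemma eq_one_or_eq_gen (z : C₂) : z = 1 ∨ z = gen := by revert z; decide

lemma gen_ne_one : gen ≠ 1 := by decide

@[simp] lemma gen_mul_gen : gen * gen = 1 := by decide

lemma forall_iff {P : C₂ → Prop} : (∀ z, P z) ↔ P 1 ∧ P gen :=
  ⟨fun h => ⟨h 1, h gen⟩, fun h z => (eq_one_or_eq_gen z).elim (· ▸ h.1) (· ▸ h.2)⟩

lemma hom_ext {M : Type*} [MulOneClass M] {f g : C₂ →* M} (h : f gen = g gen) : f = g :=
  MonoidHom.ext <| forall_iff.2 ⟨by simp only [map_one], h⟩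

def lift {M : Type*} [Monoid M] (m : M) (hm : m * m = 1) : C₂ →* M where
  toFun z := if z = 1 then 1 else m
  map_one' := if_pos rfl
  map_mul' a b := by
    rcases eq_one_or_eq_gen a with rfl | rfl <;> rcases eq_one_or_eq_gen b with rfl | rfl <;>
      simp [gen_ne_one, hm]

@[simp] lemma lift_gen {M : Type*} [Monoid M] (m : M) (hm : m * m = 1) : lift m hm gen = m :=
  if_neg (t := 1) gen_ne_one

@[simp] lemma apply_gen_apply_gen {N : Type*} [Group N] (φ : C₂ →* MulAut N) (n : N) :
    φ gen (φ gen n) = n := by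
  rw [← MulAut.mul_apply, ← map_mul, gen_mul_gen, map_one, MulAut.one_apply]

end C2

open C2 (gen)

lemma SemidirectProduct.inr_mul_inl {K G : Type*} [Group K] [Group G] {ψ : G →* MulAut K}
    (g : G) (k : K) : (inr g : K ⋊[ψ] G) * inl k = inl (ψ g k) * inr g := by
  rw [inl_aut, map_inv, inv_mul_cancel_right]

def FreeGroup.sumEquivCoprod (α β : Type*) : FreeGroup (α ⊕ β) ≃* FreeGroup α ∗ FreeGroup β :=
  MonoidHom.toMulEquiv
    (FreeGroup.lift (Sum.elim (Coprod.inl ∘ FreeGroup.of) (Coprod.inr ∘ FreeGroup.of)))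
    (Coprod.lift (FreeGroup.map Sum.inl) (FreeGroup.map Sum.inr))
    (FreeGroup.ext_hom _ _ (by rintro (a | b) <;> simp))
    (Coprod.hom_ext (FreeGroup.ext_hom _ _ fun a => by simp)
      (FreeGroup.ext_hom _ _ fun b => by simp))

def FreeGroup.coprodICoprodEquiv {ι : Type*} (X : ι → Type*) (β : Type*) :
    (CoprodI fun i => FreeGroup (X i)) ∗ FreeGroup β ≃* FreeGroup ((Σ i, X i) ⊕ β) :=
  (MulEquiv.coprodCongr
      (CoprodI.FreeGroupBasis.coprodI fun i => FreeGroupBasis.ofFreeGroup (X i)).repr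
      (MulEquiv.refl _)).trans
    (FreeGroup.sumEquivCoprod _ _).symm

namespace CoprodISemidirect

variable {I : Type*} {N : I → Type*} [∀ i, Group (N i)] (φ : ∀ i, C₂ →* MulAut (N i))

abbrev FreeProd : Type _ := CoprodI fun i => N i ⋊[φ i] C₂

def reflection (i : I) : FreeProd φ := CoprodI.of (i := i) (inr gen)

@[simp] lemma reflection_mul_self (i : I) : reflection φ i * reflection φ i = 1 := by
  rw [reflection, ← map_mul, ← map_mul, C2.gen_mul_gen, map_one, map_one]

@[simp] lemma reflection_inv (i : I) : (reflection φ i)⁻¹ = reflection φ i :=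
  inv_eq_of_mul_eq_one_right (reflection_mul_self φ i)

@[simp] lemma reflection_mul_reflection_mul (i : I) (x : FreeProd φ) :
    reflection φ i * (reflection φ i * x) = x := by
  rw [← mul_assoc, reflection_mul_self, one_mul]

lemma of_inl_apply_gen (i : I) (n : N i) :
    (CoprodI.of (inl (φ i gen n) : N i ⋊[φ i] C₂) : FreeProd φ) =
      reflection φ i * (CoprodI.of (inl n : N i ⋊[φ i] C₂) : FreeProd φ) * reflection φ i := by
  rw [inl_aut, map_mul, map_mul, map_inv, map_inv, ← reflection, reflection_inv]

variable (i₀ : I)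

variable (N) in
abbrev Base : Type _ := CoprodI N ∗ FreeGroup {i // i ≠ i₀}

def backwardBase : Base N i₀ →* FreeProd φ :=
  Coprod.lift (CoprodI.lift fun _ => CoprodI.of.comp inl)
    (FreeGroup.lift fun j => reflection φ i₀ * reflection φ j)

@[simp] lemma backwardBase_inl_of (i : I) (n : N i) :
    backwardBase φ i₀ (Coprod.inl (CoprodI.of n)) =
      CoprodI.of (M := fun i => N i ⋊[φ i] C₂) (inl n) := by
  simp [backwardBase]

@[simp] lemma backwardBase_inr_of (j : {i // i ≠ i₀}) :
    backwardBase φ i₀ (Coprod.inr (FreeGroup.of j)) = reflection φ i₀ * reflection φ j := by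
  simp [backwardBase]

variable [DecidableEq I]

/-- `edge i₀ i` stands for `t_{i₀} t_i`, where `t_i = reflection φ i`. -/
def edge (i : I) : FreeGroup {i // i ≠ i₀} := if h : i = i₀ then 1 else FreeGroup.of ⟨i, h⟩

@[simp] lemma edge_self : edge i₀ i₀ = 1 := dif_pos rfl

@[simp] lemma edge_coe (j : {i // i ≠ i₀}) : edge i₀ j = FreeGroup.of j := dif_neg j.2

lemma backwardBase_inr_edge (i : I) :
    backwardBase φ i₀ (Coprod.inr (edge i₀ i)) = reflection φ i₀ * reflection φ i := by
  by_cases h : i = i₀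
  · subst h; simp
  · exact edge_coe i₀ ⟨i, h⟩ ▸ backwardBase_inr_of φ i₀ ⟨i, h⟩

def twist : Base N i₀ →* Base N i₀ :=
  Coprod.lift
    (CoprodI.lift fun i => (MulAut.conj (Coprod.inr (edge i₀ i))).toMonoidHom.comp
      ((Coprod.inl.comp CoprodI.of).comp (φ i gen).toMonoidHom))
    (FreeGroup.lift fun j => (Coprod.inr (FreeGroup.of j))⁻¹)

lemma twist_inl_of (i : I) (n : N i) :
    twist φ i₀ (Coprod.inl (CoprodI.of n)) =
      Coprod.inr (edge i₀ i) * Coprod.inl (CoprodI.of (φ i gen n)) *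
        (Coprod.inr (edge i₀ i))⁻¹ := by
  simp [twist]

@[simp] lemma twist_inr_of (j : {i // i ≠ i₀}) :
    twist φ i₀ (Coprod.inr (FreeGroup.of j)) = (Coprod.inr (FreeGroup.of j))⁻¹ := by
  simp [twist]

lemma twist_inr_edge (i : I) :
    twist φ i₀ (Coprod.inr (edge i₀ i)) = (Coprod.inr (edge i₀ i))⁻¹ := by
  unfold edge
  split_ifs <;> simp

lemma twist_twist (x : Base N i₀) : twist φ i₀ (twist φ i₀ x) = x := by
  suffices (twist φ i₀).comp (twist φ i₀) = MonoidHom.id _ from DFunLike.congr_fun this x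
  refine Coprod.hom_ext (CoprodI.ext_hom _ _ fun i => MonoidHom.ext fun n => ?_)
    (FreeGroup.ext_hom _ _ fun j => ?_)
  · simp [twist_inl_of, twist_inr_edge, mul_assoc]
  · simp

lemma backwardBase_twist (x : Base N i₀) :
    backwardBase φ i₀ (twist φ i₀ x) =
      reflection φ i₀ * backwardBase φ i₀ x * reflection φ i₀ := by
  suffices (backwardBase φ i₀).comp (twist φ i₀) =
      (MulAut.conj (reflection φ i₀)).toMonoidHom.comp (backwardBase φ i₀) by
    simpa using DFunLike.congr_fun this x
  refine Coprod.hom_ext (CoprodI.ext_hom _ _ fun i => MonoidHom.ext fun n => ?_)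
    (FreeGroup.ext_hom _ _ fun j => ?_)
  · simp [twist_inl_of, backwardBase_inr_edge, of_inl_apply_gen, mul_assoc]
  · simp

def action : C₂ →* MulAut (Base N i₀) :=
  C2.lift ((twist φ i₀).toMulEquiv (twist φ i₀) (MonoidHom.ext (twist_twist φ i₀))
    (MonoidHom.ext (twist_twist φ i₀))) (MulEquiv.ext (twist_twist φ i₀))

@[simp] lemma action_gen_apply (x : Base N i₀) : action φ i₀ gen x = twist φ i₀ x := by
  simp [action]

abbrev Model : Type _ := Base N i₀ ⋊[action φ i₀] C₂

lemma inr_gen_mul_inl_mul_inr_gen (x : Base N i₀) :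
    (inr gen : Model φ i₀) * (inl x * inr gen) = inl (twist φ i₀ x) := by
  rw [← mul_assoc, inr_mul_inl, mul_assoc, ← map_mul, C2.gen_mul_gen, map_one, mul_one,
    action_gen_apply]

def modelReflection (i : I) : Model φ i₀ := inl (Coprod.inr (edge i₀ i))⁻¹ * inr gen

@[simp] lemma modelReflection_mul_self (i : I) :
    modelReflection φ i₀ i * modelReflection φ i₀ i = 1 := by
  rw [modelReflection, mul_assoc, inr_gen_mul_inl_mul_inr_gen, ← map_mul, map_inv,
    twist_inr_edge, inv_inv, inv_mul_cancel, map_one]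

def forward : FreeProd φ →* Model φ i₀ :=
  CoprodI.lift fun i =>
    SemidirectProduct.lift (inl.comp (Coprod.inl.comp CoprodI.of))
      (C2.lift (modelReflection φ i₀ i) (modelReflection_mul_self φ i₀ i)) <|
        C2.forall_iff.2 ⟨MonoidHom.ext fun n => by simp, MonoidHom.ext fun n => by
          simp [modelReflection, twist_inl_of, mul_assoc, inr_mul_inl]⟩

@[simp] lemma forward_reflection (i : I) :
    forward φ i₀ (reflection φ i) = modelReflection φ i₀ i := by
  simp [forward, reflection]

def backward : Model φ i₀ →* FreeProd φ :=
  SemidirectProduct.lift (backwardBase φ i₀)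
    (C2.lift (reflection φ i₀) (reflection_mul_self φ i₀)) <|
      C2.forall_iff.2 ⟨MonoidHom.ext fun x => by simp,
        MonoidHom.ext fun x => by simp [backwardBase_twist]⟩

lemma backward_comp_forward : (backward φ i₀).comp (forward φ i₀) = MonoidHom.id _ :=
  CoprodI.ext_hom _ _ fun i => SemidirectProduct.hom_ext
    (MonoidHom.ext fun n => by simp [forward, backward])
    (C2.hom_ext (by
      simp [forward, backward, modelReflection, backwardBase_inr_edge, mul_assoc]; rfl))

lemma forward_comp_backward : (forward φ i₀).comp (backward φ i₀) = MonoidHom.id _ :=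
  SemidirectProduct.hom_ext
    (Coprod.hom_ext (CoprodI.ext_hom _ _ fun i => MonoidHom.ext fun n => by
        simp [forward, backward])
      (FreeGroup.ext_hom _ _ fun j => by
        have := inr_gen_mul_inl_mul_inr_gen φ i₀ (Coprod.inr (edge i₀ j))⁻¹
        simp_all [backward, modelReflection]))
    (C2.hom_ext (by simp [backward, modelReflection]))

def equiv : FreeProd φ ≃* Model φ i₀ :=
  (forward φ i₀).toMulEquiv (backward φ i₀) (backward_comp_forward φ i₀)
    (forward_comp_backward φ i₀)

end CoprodISemidirect

/-- the free product of a nonempty family of groups `F_i ⋊ ℤ/2`, with each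
`F_i` free, is isomorphic to `F ⋊ ℤ/2` for some free group `F`. -/
theorem stmt_0 (I : Type) [Nonempty I] (X : I → Type)
    (θ : ∀ i, Multiplicative (ZMod 2) →* MulAut (FreeGroup (X i))) :
    ∃ (Y : Type) (ϑ : Multiplicative (ZMod 2) →* MulAut (FreeGroup Y)),
      Nonempty ((Monoid.CoprodI fun i => FreeGroup (X i) ⋊[θ i] Multiplicative (ZMod 2)) ≃*
        (FreeGroup Y ⋊[ϑ] Multiplicative (ZMod 2))) := by
  classical
  obtain ⟨i₀⟩ := ‹Nonempty I›
  exact ⟨_, _, ⟨(CoprodISemidirect.equiv θ i₀).trans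
    (congr' (FreeGroup.coprodICoprodEquiv X _) (MulEquiv.refl _))⟩⟩
end

section
/- Let I be an index set with a distinguished element i₀ ∈ I. Let F̃ be the free group on the set I ∖ {i₀} with generators x_i, and let θ : ℤ/2 → Aut(F̃) be the homomorphism whose nontrivial value sends x_i to x_i⁻¹ for every i ∈ I ∖ {i₀}. Then the free product ∗_{i∈I} ℤ/2 of copies of ℤ/2 indexed by I is isomorphic to F̃ ⋊_θ ℤ/2; explicitly, the map sending x_i to a_i·a_{i₀} (where a_j denotes the generator of the j-th free factor) and sending the generator of the ℤ/2-factor to a_{i₀} is a group isomorphism F̃ ⋊_θ ℤ/2 → ∗_{i∈I} ℤ/2. -/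
/-!
Write `a_i` for the generators of `∗_{i ∈ I} ℤ/2` and `t` for the generator of `ℤ/2`. Since
`a_i a_{i₀}` conjugated by `a_{i₀}` is `a_{i₀} a_i = (a_i a_{i₀})⁻¹`, the assignment
`x_i ↦ a_i a_{i₀}`, `t ↦ a_{i₀}` respects the twisting `θ` and defines a homomorphism out of
the semidirect product. Conversely each `x_i t` (and `t` itself, for `i = i₀`) is an involution
there, so `a_i ↦ x_i t` defines a homomorphism back, and the two are mutually inverse on
generators.
-/

/-- The generator `a_j` of the `j`-th factor in the free product `∗_{i ∈ I} ℤ/2`. -/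
def freeProductGen {I : Type} (j : I) :
    Monoid.CoprodI (fun _ : I => Multiplicative (ZMod 2)) :=
  Monoid.CoprodI.of (i := j) (Multiplicative.ofAdd (1 : ZMod 2))

local notation "C₂" => Multiplicative (ZMod 2)

section ZModTwo

variable {M : Type*} [Monoid M]

theorem Multiplicative.zmodTwo_eq_one_or_eq_ofAdd_one :
    ∀ z : C₂, z = 1 ∨ z = ofAdd 1 := by
  decide

theorem Multiplicative.zmodTwo_ofAdd_one_mul_self : (ofAdd 1 : C₂) * ofAdd 1 = 1 := by
  decide

def zmodTwoLift (g : M) (hg : g * g = 1) : C₂ →* M where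
  toFun z := if z.toAdd = 1 then g else 1
  map_one' := by simp
  map_mul' a b := by
    rcases a.zmodTwo_eq_one_or_eq_ofAdd_one with rfl | rfl <;>
      rcases b.zmodTwo_eq_one_or_eq_ofAdd_one with rfl | rfl <;>
      simp [hg]

@[simp]
theorem zmodTwoLift_ofAdd_one (g : M) (hg : g * g = 1) :
    zmodTwoLift g hg (.ofAdd 1) = g := by
  simp [zmodTwoLift]

theorem zmodTwo_hom_ext {f f' : C₂ →* M} (h : f (.ofAdd 1) = f' (.ofAdd 1)) : f = f' := by
  refine MonoidHom.ext fun z => ?_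
  rcases Multiplicative.zmodTwo_eq_one_or_eq_ofAdd_one z with rfl | rfl <;> simp [h]

end ZModTwo

theorem SemidirectProduct.inl_mul_inr_mul_self {N G : Type*} [Group N] [Group G]
    {φ : G →* MulAut N} {n : N} {g : G} (hn : φ g n = n⁻¹) (hg : g * g = 1) :
    (inl n * inr g : N ⋊[φ] G) * (inl n * inr g) = 1 := by
  ext <;> simp [hn, hg]

theorem freeProductGen_mul_self {I : Type} (j : I) : freeProductGen j * freeProductGen j = 1 := by
  rw [freeProductGen, ← map_mul, Multiplicative.zmodTwo_ofAdd_one_mul_self, map_one]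

theorem freeProductGen_inv {I : Type} (j : I) : (freeProductGen j)⁻¹ = freeProductGen j :=
  inv_eq_of_mul_eq_one_right (freeProductGen_mul_self j)

namespace FreeProductZModTwo

variable {I : Type} {i₀ : I} {θ : C₂ →* MulAut (FreeGroup {i : I // i ≠ i₀})}

open scoped Classical in
variable (i₀) in
noncomputable def freeGenOrOne (i : I) : FreeGroup {i : I // i ≠ i₀} :=
  if h : i = i₀ then 1 else .of ⟨i, h⟩

theorem freeGenOrOne_self : freeGenOrOne i₀ i₀ = 1 := by
  simp [freeGenOrOne]

theorem freeGenOrOne_of_ne {i : I} (h : i ≠ i₀) : freeGenOrOne i₀ i = .of ⟨i, h⟩ := by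
  simp [freeGenOrOne, h]

theorem θ_freeGenOrOne
    (hθ : ∀ i : {i : I // i ≠ i₀}, θ (.ofAdd 1) (FreeGroup.of i) = (FreeGroup.of i)⁻¹)
    (i : I) : θ (.ofAdd 1) (freeGenOrOne i₀ i) = (freeGenOrOne i₀ i)⁻¹ := by
  by_cases h : i = i₀
  · simp [h, freeGenOrOne_self]
  · simp [freeGenOrOne_of_ne h, hθ]

theorem lift_comp_θ
    (hθ : ∀ i : {i : I // i ≠ i₀}, θ (.ofAdd 1) (FreeGroup.of i) = (FreeGroup.of i)⁻¹)
    (g : C₂) :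
    (FreeGroup.lift fun i => freeProductGen i.val * freeProductGen i₀).comp (θ g).toMonoidHom =
      (MulAut.conj
        (zmodTwoLift (freeProductGen i₀) (freeProductGen_mul_self i₀) g)).toMonoidHom.comp
        (FreeGroup.lift fun i => freeProductGen i.val * freeProductGen i₀) := by
  rcases Multiplicative.zmodTwo_eq_one_or_eq_ofAdd_one g with rfl | rfl
  · ext; simp
  · ext i
    simp only [MonoidHom.comp_apply, MulEquiv.coe_toMonoidHom, hθ i, map_inv,
      FreeGroup.lift_apply_of, zmodTwoLift_ofAdd_one, MulAut.conj_apply, mul_inv_rev,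
      freeProductGen_inv, mul_assoc, freeProductGen_mul_self, mul_one]

variable (hθ : ∀ i : {i : I // i ≠ i₀}, θ (.ofAdd 1) (FreeGroup.of i) = (FreeGroup.of i)⁻¹)

def toCoprodI : FreeGroup {i : I // i ≠ i₀} ⋊[θ] C₂ →* Monoid.CoprodI (fun _ : I => C₂) :=
  SemidirectProduct.lift (FreeGroup.lift fun i => freeProductGen i.val * freeProductGen i₀)
    (zmodTwoLift (freeProductGen i₀) (freeProductGen_mul_self i₀)) (lift_comp_θ hθ)

theorem toCoprodI_inl_of (i : {i : I // i ≠ i₀}) :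
    toCoprodI hθ (.inl (.of i)) = freeProductGen i.val * freeProductGen i₀ := by
  simp [toCoprodI]

theorem toCoprodI_inr : toCoprodI hθ (.inr (.ofAdd 1)) = freeProductGen i₀ := by
  simp [toCoprodI]

noncomputable def ofCoprodI :
    Monoid.CoprodI (fun _ : I => C₂) →* FreeGroup {i : I // i ≠ i₀} ⋊[θ] C₂ :=
  Monoid.CoprodI.lift fun i =>
    zmodTwoLift (SemidirectProduct.inl (freeGenOrOne i₀ i) * SemidirectProduct.inr (.ofAdd 1))
      (SemidirectProduct.inl_mul_inr_mul_self (θ_freeGenOrOne hθ i)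
        Multiplicative.zmodTwo_ofAdd_one_mul_self)

theorem ofCoprodI_freeProductGen (i : I) :
    ofCoprodI hθ (freeProductGen i) = .inl (freeGenOrOne i₀ i) * .inr (.ofAdd 1) := by
  simp [ofCoprodI, freeProductGen]

theorem ofCoprodI_comp_toCoprodI :
    (ofCoprodI hθ).comp (toCoprodI hθ) = MonoidHom.id _ := by
  apply SemidirectProduct.hom_ext
  · refine FreeGroup.ext_hom _ _ fun ⟨i, hi⟩ => ?_
    simp only [MonoidHom.coe_comp, Function.comp_apply, MonoidHom.id_comp, toCoprodI_inl_of,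
      map_mul, ofCoprodI_freeProductGen, freeGenOrOne_of_ne hi, freeGenOrOne_self, map_one,
      one_mul, mul_assoc, mul_eq_left]
    rw [← map_mul, Multiplicative.zmodTwo_ofAdd_one_mul_self, map_one]
  · apply zmodTwo_hom_ext
    simp [toCoprodI_inr, ofCoprodI_freeProductGen, freeGenOrOne_self]

theorem toCoprodI_comp_ofCoprodI :
    (toCoprodI hθ).comp (ofCoprodI hθ) = MonoidHom.id _ := by
  refine Monoid.CoprodI.ext_hom _ _ fun i => zmodTwo_hom_ext ?_
  change toCoprodI hθ (ofCoprodI hθ (freeProductGen i)) = freeProductGen i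
  by_cases h : i = i₀
  · subst h
    simp [ofCoprodI_freeProductGen, freeGenOrOne_self, toCoprodI_inr]
  · simp [ofCoprodI_freeProductGen, freeGenOrOne_of_ne h, toCoprodI_inl_of, toCoprodI_inr,
      mul_assoc, freeProductGen_mul_self]

end FreeProductZModTwo

/-- if `F̃` is the free group on `I \ {i₀}` and `θ : ℤ/2 → Aut(F̃)` has its
nontrivial value sending each generator `x_i` to `x_i⁻¹`, then the map sending `x_i` to
`a_i * a_{i₀}` and the generator of the `ℤ/2`-factor to `a_{i₀}` is a group isomorphism
`F̃ ⋊_θ ℤ/2 ≃ ∗_{i ∈ I} ℤ/2`. -/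
theorem stmt_1 {I : Type} (i₀ : I)
    (θ : Multiplicative (ZMod 2) →* MulAut (FreeGroup {i : I // i ≠ i₀}))
    (hθ : ∀ i : {i : I // i ≠ i₀},
      θ (Multiplicative.ofAdd (1 : ZMod 2)) (FreeGroup.of i) = (FreeGroup.of i)⁻¹) :
    ∃ e : (FreeGroup {i : I // i ≠ i₀} ⋊[θ] Multiplicative (ZMod 2)) ≃*
        Monoid.CoprodI (fun _ : I => Multiplicative (ZMod 2)),
      (∀ i : {i : I // i ≠ i₀},
        e (SemidirectProduct.inl (FreeGroup.of i)) = freeProductGen i.val * freeProductGen i₀) ∧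
      e (SemidirectProduct.inr (Multiplicative.ofAdd (1 : ZMod 2))) = freeProductGen i₀ :=
  ⟨MonoidHom.toMulEquiv _ _ (FreeProductZModTwo.ofCoprodI_comp_toCoprodI hθ)
      (FreeProductZModTwo.toCoprodI_comp_ofCoprodI hθ),
    FreeProductZModTwo.toCoprodI_inl_of hθ, FreeProductZModTwo.toCoprodI_inr hθ⟩
end

section
/- Let I be a nonempty index set and for each i ∈ I let F_i be a free group and θ_i : ℤ/2 → Aut(F_i) a homomorphism. Let p : ∗_{i∈I}(F_i ⋊_{θ_i} ℤ/2) → ℤ/2 be the homomorphism whose restriction to each free factor F_i ⋊_{θ_i} ℤ/2 is the projection onto ℤ/2. Then the kernel of p is a free group. -/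
/-!
Write `t_i` for the generator of the `i`-th copy of `ℤ/2` and fix an index `i₀`, `t = t_{i₀}`.
The free product is the semidirect product `W ⋊ ⟨t⟩`, where `W` is the free group on the free
bases of all the `F_i` together with letters `c_i = t_i t` for `i ≠ i₀`: conjugation by `t`
preserves `W`, since `t f t = c_i⁻¹ θ_i(f) c_i` for `f ∈ F_i` and `t c_i t = c_i⁻¹`, and the
maps `F_i ⋊ ℤ/2 → W ⋊ ℤ/2`, `f ↦ f`, `t_i ↦ c_i t` glue to an inverse of the obvious map
`W ⋊ ⟨t⟩ → ∗_i (F_i ⋊ ℤ/2)`. Under this isomorphism `p` becomes the projection onto `⟨t⟩`,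
whose kernel is `W`.
-/

open Multiplicative SemidirectProduct Monoid

namespace ZModTwo

abbrev gen : Multiplicative (ZMod 2) := ofAdd 1

lemma eq_one_or_eq_gen : ∀ x : Multiplicative (ZMod 2), x = 1 ∨ x = gen := by decide

lemma gen_mul_gen : gen * gen = 1 := by decide

lemma hom_ext {M : Type*} [Monoid M] {f g : Multiplicative (ZMod 2) →* M}
    (h : f gen = g gen) : f = g := by
  refine MonoidHom.ext fun x => ?_
  rcases eq_one_or_eq_gen x with rfl | rfl
  · simp only [map_one]
  · exact h

lemma map_gen_mul_map_gen {M : Type*} [Monoid M] (f : Multiplicative (ZMod 2) →* M) :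
    f gen * f gen = 1 := by
  rw [← map_mul, gen_mul_gen, map_one]

@[simp] lemma aut_gen_aut_gen {N : Type*} [Group N] (φ : Multiplicative (ZMod 2) →* MulAut N)
    (n : N) : φ gen (φ gen n) = n := by
  rw [← MulAut.mul_apply, map_gen_mul_map_gen, MulAut.one_apply]

def lift {M : Type*} [Monoid M] (t : M) (ht : t * t = 1) : Multiplicative (ZMod 2) →* M where
  toFun x := if x = 1 then 1 else t
  map_one' := if_pos rfl
  map_mul' x y := by
    rcases eq_one_or_eq_gen x with rfl | rfl <;> rcases eq_one_or_eq_gen y with rfl | rfl <;>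
      simp [gen_mul_gen, ht, show gen ≠ 1 by decide]

@[simp] lemma lift_gen {M : Type*} [Monoid M] (t : M) (ht : t * t = 1) : lift t ht gen = t :=
  if_neg (t := 1) (show gen ≠ 1 by decide)

lemma lift_compat {N H : Type*} [Group N] [Group H] {φ : Multiplicative (ZMod 2) →* MulAut N}
    (fn : N →* H) (fg : Multiplicative (ZMod 2) →* H)
    (h : fn.comp (φ gen).toMonoidHom = (MulAut.conj (fg gen)).toMonoidHom.comp fn) :
    ∀ g, fn.comp (φ g).toMonoidHom = (MulAut.conj (fg g)).toMonoidHom.comp fn := by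
  intro g
  rcases eq_one_or_eq_gen g with rfl | rfl
  · ext; simp
  · exact h

end ZModTwo

noncomputable def MonoidHom.kerEquivOfEqRightHomComp {G N H : Type*} [Group G] [Group N]
    [Group H] {φ : H →* MulAut N} (e : G ≃* N ⋊[φ] H) {p : G →* H}
    (hp : p = rightHom.comp (e : G →* N ⋊[φ] H)) : p.ker ≃* N :=
  (e.subgroupMap p.ker).trans <|
    (MulEquiv.subgroupCongr <| by
      rw [hp, ← MonoidHom.comap_ker, Subgroup.map_comap_eq_self_of_surjective e.surjective,
        range_inl_eq_ker_rightHom]).trans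
      (MonoidHom.ofInjective inl_injective).symm

namespace CoprodSemidirectZModTwo

noncomputable section

open ZModTwo

variable {I : Type} {X : I → Type} (i₀ : I)

abbrev Gens (I : Type) (X : I → Type) (i₀ : I) : Type := (Σ i, X i) ⊕ {i : I // i ≠ i₀}

local notation "W" => FreeGroup (Gens I X i₀)

def incl (i : I) : FreeGroup (X i) →* W := FreeGroup.map fun x => .inl ⟨i, x⟩

lemma of_inl_eq_incl {i : I} (x : X i) : (FreeGroup.of (.inl ⟨i, x⟩) : W) = incl i₀ i (.of x) :=
  FreeGroup.map.of.symm

open scoped Classical in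
/-- The letter `c_i`, standing for `t_i t_{i₀}`; it is `1` for `i = i₀`. -/
def corr (i : I) : W := if h : i = i₀ then 1 else .of (.inr ⟨i, h⟩)

@[simp] lemma corr_self : corr (X := X) i₀ i₀ = 1 := dif_pos rfl

lemma corr_of_ne {i : I} (h : i ≠ i₀) : corr (X := X) i₀ i = .of (.inr ⟨i, h⟩) := dif_neg h

variable (θ : ∀ i, Multiplicative (ZMod 2) →* MulAut (FreeGroup (X i)))

/-- Conjugation by `t_{i₀}`, written in the letters of `W`. -/
def conjGen : W →* W :=
  FreeGroup.lift <| Sum.elim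
    (fun x => (corr i₀ x.1)⁻¹ * incl i₀ x.1 (θ x.1 gen (.of x.2)) * corr i₀ x.1)
    (fun j => (.of (.inr j))⁻¹)

lemma conjGen_incl (i : I) (w : FreeGroup (X i)) :
    conjGen i₀ θ (incl i₀ i w) = (corr i₀ i)⁻¹ * incl i₀ i (θ i gen w) * corr i₀ i := by
  have : (conjGen i₀ θ).comp (incl i₀ i) =
      (MulAut.conj (corr i₀ i)⁻¹).toMonoidHom.comp ((incl i₀ i).comp (θ i gen).toMonoidHom) :=
    FreeGroup.ext_hom _ _ fun x => by simp [conjGen, incl]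
  simpa using DFunLike.congr_fun this w

lemma conjGen_corr (i : I) : conjGen i₀ θ (corr i₀ i) = (corr i₀ i)⁻¹ := by
  by_cases h : i = i₀
  · subst h; simp
  · simp [corr_of_ne i₀ h, conjGen]

lemma conjGen_conjGen : (conjGen i₀ θ).comp (conjGen i₀ θ) = .id W := by
  refine FreeGroup.ext_hom _ _ ?_
  rintro (⟨i, x⟩ | j)
  · rw [of_inl_eq_incl]
    simp only [MonoidHom.comp_apply, conjGen_incl, map_mul, map_inv, conjGen_corr,
      aut_gen_aut_gen, MonoidHom.id_apply]
    group
  · simp [conjGen]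

def action : Multiplicative (ZMod 2) →* MulAut W :=
  ZModTwo.lift ((conjGen i₀ θ).toMulEquiv _ (conjGen_conjGen i₀ θ) (conjGen_conjGen i₀ θ)) <| by
    ext w; exact DFunLike.congr_fun (conjGen_conjGen i₀ θ) w

@[simp] lemma action_gen_apply (w : W) : action i₀ θ gen w = conjGen i₀ θ w := by
  simp [action]

local notation "G" => CoprodI fun i => FreeGroup (X i) ⋊[θ i] Multiplicative (ZMod 2)

local notation "Ŵ" => W ⋊[action i₀ θ] Multiplicative (ZMod 2)

def ofFactor (i : I) : FreeGroup (X i) ⋊[θ i] Multiplicative (ZMod 2) →* G :=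
  CoprodI.of (M := fun i => FreeGroup (X i) ⋊[θ i] Multiplicative (ZMod 2))

@[simp] lemma lift_ofFactor {M : Type*} [Monoid M]
    (f : ∀ i, FreeGroup (X i) ⋊[θ i] Multiplicative (ZMod 2) →* M) (i : I)
    (m : FreeGroup (X i) ⋊[θ i] Multiplicative (ZMod 2)) :
    CoprodI.lift f (ofFactor θ i m) = f i m :=
  CoprodI.lift_of (M := fun i => FreeGroup (X i) ⋊[θ i] Multiplicative (ZMod 2)) f m

def t (i : I) : G := ofFactor θ i (inr gen)

lemma t_mul_t (i : I) : t θ i * t θ i = 1 :=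
  map_gen_mul_map_gen ((ofFactor θ i).comp inr)

lemma t_inv (i : I) : (t θ i)⁻¹ = t θ i := inv_eq_of_mul_eq_one_right (t_mul_t θ i)

lemma ofFactor_inl_aut (i : I) (w : FreeGroup (X i)) :
    ofFactor θ i (inl (θ i gen w)) = t θ i * ofFactor θ i (inl w) * (t θ i)⁻¹ := by
  rw [inl_aut, map_mul, map_mul, map_inv, map_inv]
  rfl

def kerToCoprod : W →* G :=
  FreeGroup.lift <| Sum.elim (fun x => ofFactor θ x.1 (inl (.of x.2))) (fun j => t θ j.1 * t θ i₀)

lemma kerToCoprod_incl (i : I) (w : FreeGroup (X i)) :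
    kerToCoprod i₀ θ (incl i₀ i w) = ofFactor θ i (inl w) := by
  have : (kerToCoprod i₀ θ).comp (incl i₀ i) = (ofFactor θ i).comp inl :=
    FreeGroup.ext_hom _ _ fun x => by simp [kerToCoprod, incl]
  exact DFunLike.congr_fun this w

lemma kerToCoprod_corr (i : I) : kerToCoprod i₀ θ (corr i₀ i) = t θ i * t θ i₀ := by
  by_cases h : i = i₀
  · subst h; rw [corr_self, map_one, t_mul_t]
  · simp [corr_of_ne i₀ h, kerToCoprod]

lemma kerToCoprod_comp_conjGen :
    (kerToCoprod i₀ θ).comp (conjGen i₀ θ) =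
      (MulAut.conj (t θ i₀)).toMonoidHom.comp (kerToCoprod i₀ θ) := by
  refine FreeGroup.ext_hom _ _ ?_
  rintro (⟨i, x⟩ | j)
  · rw [of_inl_eq_incl]
    simp only [MonoidHom.comp_apply, conjGen_incl, map_mul, map_inv, kerToCoprod_incl,
      kerToCoprod_corr, ofFactor_inl_aut, MulEquiv.coe_toMonoidHom, MulAut.conj_apply]
    calc _ = (t θ i₀)⁻¹ * ofFactor θ i (inl (.of x)) * t θ i₀ := by group
      _ = _ := by rw [t_inv]
  · simp [conjGen, kerToCoprod, t_inv, mul_assoc, t_mul_t]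

def toCoprod : Ŵ →* G :=
  SemidirectProduct.lift (kerToCoprod i₀ θ) (ZModTwo.lift (t θ i₀) (t_mul_t θ i₀)) <|
    lift_compat _ _ <| by
      rw [lift_gen, ← kerToCoprod_comp_conjGen]
      ext w; simp

@[simp] lemma toCoprod_inl (w : W) : toCoprod i₀ θ (inl w) = kerToCoprod i₀ θ w := lift_inl _ _ _ _

@[simp] lemma toCoprod_inr_gen : toCoprod i₀ θ (inr gen) = t θ i₀ := by simp [toCoprod]

lemma inl_conjGen (w : W) :
    (inl (conjGen i₀ θ w) : Ŵ) = inr gen * inl w * (inr gen)⁻¹ := by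
  rw [← action_gen_apply, inl_aut, map_inv]

/-- The image of `t_i` in `W ⋊ ⟨t_{i₀}⟩`. -/
def tSemi (i : I) : Ŵ := inl (corr i₀ i) * inr gen

lemma tSemi_mul_tSemi (i : I) : tSemi i₀ θ i * tSemi i₀ θ i = 1 := by
  have : (inr gen : Ŵ) * inl (corr i₀ i) = inl (corr i₀ i)⁻¹ * inr gen := by
    rw [← conjGen_corr i₀ θ, inl_conjGen, inv_mul_cancel_right]
  rw [tSemi, mul_assoc, ← mul_assoc (inr gen), this, mul_assoc, ← map_mul inr, gen_mul_gen,
    map_one, mul_one, ← map_mul, mul_inv_cancel, map_one]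

lemma inl_incl_comp_aut_gen (i : I) :
    ((inl : W →* Ŵ).comp (incl i₀ i)).comp (θ i gen).toMonoidHom =
      (MulAut.conj (tSemi i₀ θ i)).toMonoidHom.comp ((inl : W →* Ŵ).comp (incl i₀ i)) := by
  refine MonoidHom.ext fun w => ?_
  simp only [MonoidHom.comp_apply, MulEquiv.coe_toMonoidHom, MulAut.conj_apply, tSemi]
  calc inl (incl i₀ i (θ i gen w))
      = inl (corr i₀ i * ((corr i₀ i)⁻¹ * incl i₀ i (θ i gen w) * corr i₀ i) * (corr i₀ i)⁻¹) := by
        congr 1; group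
    _ = inl (corr i₀ i) * inl (conjGen i₀ θ (incl i₀ i w)) * (inl (corr i₀ i))⁻¹ := by
        rw [conjGen_incl, map_mul, map_mul, map_inv]
    _ = _ := by rw [inl_conjGen]; group

def ofCoprod : G →* Ŵ :=
  CoprodI.lift fun i =>
    SemidirectProduct.lift ((inl : W →* Ŵ).comp (incl i₀ i))
      (ZModTwo.lift (tSemi i₀ θ i) (tSemi_mul_tSemi i₀ θ i))
      (lift_compat _ _ <| by rw [lift_gen]; exact inl_incl_comp_aut_gen i₀ θ i)

@[simp] lemma ofCoprod_inl (i : I) (w : FreeGroup (X i)) :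
    ofCoprod i₀ θ (ofFactor θ i (inl w)) = inl (incl i₀ i w) := by
  simp [ofCoprod]

@[simp] lemma ofCoprod_t (i : I) : ofCoprod i₀ θ (t θ i) = tSemi i₀ θ i := by
  simp [ofCoprod, t]

lemma toCoprod_comp_ofCoprod : (toCoprod i₀ θ).comp (ofCoprod i₀ θ) = .id G := by
  refine CoprodI.ext_hom _ _ fun i => SemidirectProduct.hom_ext ?_ (hom_ext ?_)
  · refine MonoidHom.ext fun w => ?_
    show toCoprod i₀ θ (ofCoprod i₀ θ (ofFactor θ i (inl w))) = ofFactor θ i (inl w)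
    rw [ofCoprod_inl, toCoprod_inl, kerToCoprod_incl]
  · show toCoprod i₀ θ (ofCoprod i₀ θ (t θ i)) = t θ i
    rw [ofCoprod_t, tSemi, map_mul, toCoprod_inl, toCoprod_inr_gen, kerToCoprod_corr, mul_assoc,
      t_mul_t, mul_one]

lemma ofCoprod_comp_toCoprod : (ofCoprod i₀ θ).comp (toCoprod i₀ θ) = .id Ŵ := by
  refine SemidirectProduct.hom_ext (FreeGroup.ext_hom _ _ ?_) (hom_ext ?_)
  · rintro (⟨i, x⟩ | ⟨j, hj⟩)
    · simp [kerToCoprod, incl]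
    · simp [kerToCoprod, tSemi, corr_of_ne i₀ hj, mul_assoc, ← map_mul inr, gen_mul_gen]
  · simp [tSemi]

def coprodEquiv : G ≃* Ŵ :=
  (ofCoprod i₀ θ).toMulEquiv (toCoprod i₀ θ) (toCoprod_comp_ofCoprod i₀ θ)
    (ofCoprod_comp_toCoprod i₀ θ)

lemma parity_eq_rightHom_comp_ofCoprod :
    CoprodI.lift (fun i => (rightHom : FreeGroup (X i) ⋊[θ i] Multiplicative (ZMod 2) →* _)) =
      rightHom.comp (ofCoprod i₀ θ) := by
  refine CoprodI.ext_hom _ _ fun i => SemidirectProduct.hom_ext ?_ (hom_ext ?_)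
  · refine MonoidHom.ext fun w => ?_
    show CoprodI.lift (fun i => rightHom) (ofFactor θ i (inl w)) =
      rightHom (ofCoprod i₀ θ (ofFactor θ i (inl w)))
    simp
  · show CoprodI.lift (fun i => rightHom) (t θ i) = rightHom (ofCoprod i₀ θ (t θ i))
    rw [ofCoprod_t, tSemi, t, lift_ofFactor, map_mul, rightHom_inl, rightHom_inr, one_mul,
      rightHom_inr]

end

end CoprodSemidirectZModTwo

/-- the kernel of the homomorphism `∗_{i∈I}(F_i ⋊ ℤ/2) → ℤ/2` restricting on
each free factor to the projection onto `ℤ/2` is a free group. -/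
theorem stmt_2 (I : Type) [Nonempty I] (X : I → Type)
    (θ : ∀ i, Multiplicative (ZMod 2) →* MulAut (FreeGroup (X i))) :
    ∃ Y : Type,
      Nonempty
        ((MonoidHom.ker
            (Monoid.CoprodI.lift fun i =>
              (SemidirectProduct.rightHom :
                FreeGroup (X i) ⋊[θ i] Multiplicative (ZMod 2) →* Multiplicative (ZMod 2)))) ≃*
          FreeGroup Y) := by
  obtain ⟨i₀⟩ := ‹Nonempty I›
  open CoprodSemidirectZModTwo in
  exact ⟨Gens I X i₀, ⟨MonoidHom.kerEquivOfEqRightHomComp (coprodEquiv i₀ θ)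
    (parity_eq_rightHom_comp_ofCoprod i₀ θ)⟩⟩
end

section
/- Every infinite, torsion-free, virtually cyclic group is isomorphic to ℤ. -/
/-!
Let `H` be a cyclic subgroup of finite index; its normal core is again cyclic of finite
index, say `zpowers x`, with `x ≠ 1` since `G` is infinite. Conjugation acts on
`zpowers x ≅ ℤ` by `±1`. If `g` inverted `x`, then `g ^ n ∈ zpowers x` (with `n` the index)
would be both fixed and inverted by conjugation with `g`, so `g ^ n = 1`, hence `g = 1`:
impossible. So `x` is central, and the transfer to `zpowers x` is `g ↦ g ^ n`, which is
injective because `G` is torsion-free. Thus `G` embeds in an infinite cyclic group.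
-/

/-- Torsion-free monoid, as in the older Mathlib (since removed). -/
def Monoid.IsTorsionFree (G : Type*) [Monoid G] : Prop :=
  ∀ g : G, g ≠ 1 → ¬IsOfFinOrder g

open Subgroup

variable {G : Type*} [Group G]

theorem Monoid.IsTorsionFree.eq_one_of_pow_eq_one (htf : Monoid.IsTorsionFree G) {g : G} {n : ℕ}
    (hn : n ≠ 0) (h : g ^ n = 1) : g = 1 :=
  by_contra fun hg ↦ htf g hg (isOfFinOrder_iff_pow_eq_one.mpr ⟨n, Nat.pos_of_ne_zero hn, h⟩)

theorem conj_eq_or_eq_inv_of_zpowers_normal {x : G} (hx : ¬IsOfFinOrder x)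
    [(zpowers x).Normal] (g : G) : g * x * g⁻¹ = x ∨ g * x * g⁻¹ = x⁻¹ := by
  have hinj : Function.Injective (x ^ · : ℤ → G) := injective_zpow_iff_not_isOfFinOrder.mpr hx
  have hconj (g : G) : g * x * g⁻¹ ∈ zpowers x :=
    ‹(zpowers x).Normal›.conj_mem x (mem_zpowers x) g
  obtain ⟨k, hk⟩ := mem_zpowers_iff.mp (hconj g)
  obtain ⟨j, hj⟩ := mem_zpowers_iff.mp (hconj g⁻¹)
  have hkj : k * j = 1 := hinj <| by
    calc x ^ (k * j) = g⁻¹ * x ^ k * g⁻¹⁻¹ := by rw [mul_comm, zpow_mul, hj, conj_zpow]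
      _ = x ^ (1 : ℤ) := by rw [hk]; group
  rcases Int.eq_one_or_neg_one_of_mul_eq_one hkj with rfl | rfl
  · exact .inl (by rw [← hk, zpow_one])
  · exact .inr (by rw [← hk, zpow_neg_one])

theorem mem_center_of_zpowers_normal (htf : Monoid.IsTorsionFree G) {x : G} (hx : x ≠ 1)
    [(zpowers x).Normal] [(zpowers x).FiniteIndex] : x ∈ center G := by
  rw [mem_center_iff]
  intro g
  rcases conj_eq_or_eq_inv_of_zpowers_normal (htf x hx) g with hg | hg
  · exact mul_inv_eq_iff_eq_mul.mp hg
  · exfalso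
    have hinj : Function.Injective (x ^ · : ℤ → G) :=
      injective_zpow_iff_not_isOfFinOrder.mpr (htf x hx)
    obtain ⟨t, ht⟩ := mem_zpowers_iff.mp ((zpowers x).pow_index_mem g)
    have ht0 : t = 0 := by
      have : t = -t := hinj <| by
        calc x ^ t = g * x ^ t * g⁻¹ := by rw [ht]; group
          _ = x ^ (-t) := by rw [← conj_zpow, hg, inv_zpow, zpow_neg]
      omega
    have hg1 : g = 1 := htf.eq_one_of_pow_eq_one FiniteIndex.index_ne_zero
      (by rw [← ht, ht0, zpow_zero])
    rw [hg1, one_mul, inv_one, mul_one] at hg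
    exact hx <| htf.eq_one_of_pow_eq_one two_ne_zero <| by
      rw [pow_two]; exact eq_inv_iff_mul_eq_one.mp hg

theorem MonoidHom.transfer_injective_of_le_center (htf : Monoid.IsTorsionFree G)
    {H : Subgroup G} [H.FiniteIndex] (hH : H ≤ center G) {A : Type*} [CommGroup A]
    {ϕ : H →* A} (hϕ : Function.Injective ϕ) : Function.Injective ϕ.transfer := by
  rw [injective_iff_map_eq_one]
  intro g hg
  rw [ϕ.transfer_eq_pow g fun k g₀ hk ↦ by
    rw [← mul_right_inj, ← (hH hk).comm, mul_inv_cancel_right]] at hg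
  exact htf.eq_one_of_pow_eq_one FiniteIndex.index_ne_zero
    (congrArg Subtype.val ((injective_iff_map_eq_one ϕ).mp hϕ _ hg))

theorem isCyclic_of_le_center (htf : Monoid.IsTorsionFree G) {H : Subgroup G} [H.FiniteIndex]
    [IsCyclic H] (hH : H ≤ center G) : IsCyclic G :=
  letI := IsCyclic.commGroup (α := H)
  isCyclic_of_injective _
    (MonoidHom.transfer_injective_of_le_center htf hH (ϕ := MonoidHom.id H) Function.injective_id)

/-- Every infinite, torsion-free, virtually cyclic group is
isomorphic to `ℤ`. -/
theorem stmt_4 (G : Type) [Group G] [Infinite G]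
    (hvc : ∃ H : Subgroup G, IsCyclic H ∧ H.FiniteIndex)
    (htf : Monoid.IsTorsionFree G) :
    Nonempty (G ≃* Multiplicative ℤ) := by
  obtain ⟨H, hH, hHfi⟩ := hvc
  obtain ⟨x, hx⟩ := (H.normalCore.isCyclic_iff_exists_zpowers_eq_top).mp
    (isCyclic_of_le H.normalCore_le)
  have : (zpowers x).Normal := hx ▸ H.normalCore_normal
  have : (zpowers x).FiniteIndex := hx ▸ inferInstance
  have hx1 : x ≠ 1 := by
    rintro rfl
    have := FiniteIndex.index_ne_zero (H := zpowers (1 : G))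
    rw [zpowers_one_eq_bot, index_bot, Nat.card_eq_zero_of_infinite] at this
    exact this rfl
  have : IsCyclic G :=
    isCyclic_of_le_center htf (zpowers_le.mpr (mem_center_of_zpowers_normal htf hx1))
  exact ⟨intCyclicMulEquiv.symm⟩
end

section
/- For n ≥ 1, the map D_∞ × (ℝ × S^{2n}) → ℝ × S^{2n} given by (m, a) · (t, x) = (m + (−1)^a t, (−1)^a x), where D_∞ = ℤ ⋊ ℤ/2 is the infinite dihedral group, defines a group action of D_∞ on ℝ × S^{2n} which is free and properly discontinuous. -/
/-- The automorphism of `ℤ` (written multiplicatively) given by negation. -/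
def negAutZ : MulAut (Multiplicative ℤ) := MulEquiv.inv (Multiplicative ℤ)

lemma negAutZ_sq : negAutZ ^ 2 = 1 := by
  ext z
  simp [negAutZ, pow_succ]

/-- The action of `ℤ/2` on `ℤ` in which the generator acts by negation. -/
def dihedralTwist : Multiplicative (ZMod 2) →* MulAut (Multiplicative ℤ) where
  toFun a := negAutZ ^ (Multiplicative.toAdd a).val
  map_one' := by
    show negAutZ ^ (Multiplicative.toAdd (1 : Multiplicative (ZMod 2))).val = 1
    simp
  map_mul' x y := by
    show negAutZ ^ (Multiplicative.toAdd x + Multiplicative.toAdd y).val = _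
    rw [ZMod.val_add, ← pow_eq_pow_mod _ negAutZ_sq, pow_add]

/-- The infinite dihedral group, as the semidirect product `ℤ ⋊ ℤ/2` where the
generator of `ℤ/2` acts on `ℤ` by negation; its elements are pairs `(m, a)` with
multiplication `(m, a)(m', a') = (m + (−1)^a m', a + a')`. -/
abbrev InfiniteDihedral : Type := Multiplicative ℤ ⋊[dihedralTwist] Multiplicative (ZMod 2)

/-- The `2n`-sphere, as the unit sphere in `ℝ^{2n+1}`. -/
abbrev EvenSphere (n : ℕ) := Metric.sphere (0 : EuclideanSpace ℝ (Fin (2 * n + 1))) 1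

/-- The map `(m, a) • (t, x) = (m + (−1)^a t, (−1)^a x)` on `ℝ × S^{2n}`. -/
noncomputable def dihedralSmul (n : ℕ) (g : InfiniteDihedral)
    (p : ℝ × EvenSphere n) : ℝ × EvenSphere n :=
  (((Multiplicative.toAdd g.left : ℤ) : ℝ) +
      ((-1 : ℝ) ^ (Multiplicative.toAdd g.right).val) * p.1,
    ⟨((-1 : ℝ) ^ (Multiplicative.toAdd g.right).val) •
        (p.2 : EuclideanSpace ℝ (Fin (2 * n + 1))), by
      have h := p.2.2
      simp only [mem_sphere_zero_iff_norm] at h ⊢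
      rw [norm_smul, h, norm_pow, norm_neg, norm_one, one_pow, mul_one]⟩)

open Multiplicative

lemma ZMod.val_two_eq_zero_or_one (a : ZMod 2) : a.val = 0 ∨ a.val = 1 := by
  have := ZMod.val_lt a
  omega

lemma pow_val_add_of_sq_eq_one {M : Type*} [Monoid M] {x : M} (hx : x ^ 2 = 1) (a b : ZMod 2) :
    x ^ (a + b).val = x ^ a.val * x ^ b.val := by
  rw [ZMod.val_add, ← pow_eq_pow_mod _ hx, pow_add]

lemma toAdd_dihedralTwist_apply (a : Multiplicative (ZMod 2)) (z : Multiplicative ℤ) :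
    toAdd (dihedralTwist a z) = (-1) ^ (toAdd a).val * toAdd z := by
  rcases ZMod.val_two_eq_zero_or_one (toAdd a) with h | h <;> simp [dihedralTwist, negAutZ, h]

lemma InfiniteDihedral.finite_setOf_abs_left_le (N : ℤ) :
    {g : InfiniteDihedral | |toAdd g.left| ≤ N}.Finite := by
  let e : InfiniteDihedral ≃ ℤ × Multiplicative (ZMod 2) :=
    SemidirectProduct.equivProd.trans (Equiv.prodCongr toAdd (Equiv.refl _))
  convert ((Set.finite_Icc (-N) N).prod Set.finite_univ).preimage_embedding e.toEmbedding
  ext g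
  simp [e, abs_le]

section Action

variable {n : ℕ}

lemma dihedralSmul_one (p : ℝ × EvenSphere n) : dihedralSmul n 1 p = p := by
  refine Prod.ext ?_ (Subtype.ext ?_) <;> simp [dihedralSmul]

lemma dihedralSmul_mul (g h : InfiniteDihedral) (p : ℝ × EvenSphere n) :
    dihedralSmul n (g * h) p = dihedralSmul n g (dihedralSmul n h p) := by
  have hsign := pow_val_add_of_sq_eq_one (by norm_num : (-1 : ℝ) ^ 2 = 1)
  refine Prod.ext ?_ (Subtype.ext ?_)
  · simp only [dihedralSmul, SemidirectProduct.mul_left, SemidirectProduct.mul_right, toAdd_mul,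
      toAdd_dihedralTwist_apply, hsign]
    push_cast
    ring
  · simp only [dihedralSmul, SemidirectProduct.mul_right, toAdd_mul, hsign, smul_smul]

/-- Odd elements act on the sphere by the antipodal map, which has no fixed points. -/
lemma eq_one_of_dihedralSmul_eq_self {g : InfiniteDihedral} {p : ℝ × EvenSphere n}
    (h : dihedralSmul n g p = p) : g = 1 := by
  have h₁ := congrArg Prod.fst h
  have h₂ := congrArg (fun q : ℝ × EvenSphere n => (q.2 : EuclideanSpace ℝ (Fin (2 * n + 1)))) h
  simp only [dihedralSmul] at h₁ h₂
  rcases ZMod.val_two_eq_zero_or_one (toAdd g.right) with hr | hr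
  · rw [hr, pow_zero, one_mul, add_eq_right, Int.cast_eq_zero] at h₁
    exact SemidirectProduct.ext h₁ ((ZMod.val_eq_zero _).mp hr)
  · rw [hr, pow_one, neg_one_smul] at h₂
    exact absurd (Subtype.ext h₂.symm) (ne_neg_of_mem_sphere ℝ one_ne_zero p.2)

lemma abs_toAdd_left_le (g : InfiniteDihedral) (p : ℝ × EvenSphere n) :
    |((toAdd g.left : ℤ) : ℝ)| ≤ |(dihedralSmul n g p).1| + |p.1| := by
  have hsign : |(-1 : ℝ) ^ (toAdd g.right).val * p.1| = |p.1| := by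
    rw [abs_mul, abs_neg_one_pow, one_mul]
  calc |((toAdd g.left : ℤ) : ℝ)|
      = |(dihedralSmul n g p).1 - (-1 : ℝ) ^ (toAdd g.right).val * p.1| := by
        simp [dihedralSmul]
    _ ≤ |(dihedralSmul n g p).1| + |p.1| := hsign ▸ abs_sub _ _

lemma properlyDiscontinuousSMul_dihedralSmul :
    @ProperlyDiscontinuousSMul InfiniteDihedral (ℝ × EvenSphere n) _ ⟨dihedralSmul n⟩ := by
  let _ : SMul InfiniteDihedral (ℝ × EvenSphere n) := ⟨dihedralSmul n⟩
  refine ⟨fun {K L} hK hL => ?_⟩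
  obtain ⟨R₁, hR₁⟩ := hK.exists_bound_of_continuousOn continuous_fst.continuousOn
  obtain ⟨R₂, hR₂⟩ := hL.exists_bound_of_continuousOn continuous_fst.continuousOn
  refine (InfiniteDihedral.finite_setOf_abs_left_le ⌈R₂ + R₁⌉).subset ?_
  rintro g ⟨_, ⟨p, hpK, rfl⟩, hgpL⟩
  have hbound : |((toAdd g.left : ℤ) : ℝ)| ≤ R₂ + R₁ :=
    (abs_toAdd_left_le g p).trans (add_le_add (hR₂ _ hgpL) (hR₁ p hpK))
  show |toAdd g.left| ≤ ⌈R₂ + R₁⌉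
  exact_mod_cast hbound.trans (Int.le_ceil _)

end Action

theorem stmt_9_general (n : ℕ) :
    (∀ p : ℝ × EvenSphere n, dihedralSmul n 1 p = p) ∧
    (∀ (a b : InfiniteDihedral) (p : ℝ × EvenSphere n),
      dihedralSmul n (a * b) p = dihedralSmul n a (dihedralSmul n b p)) ∧
    (∀ (g : InfiniteDihedral) (p : ℝ × EvenSphere n), dihedralSmul n g p = p → g = 1) ∧
    @ProperlyDiscontinuousSMul InfiniteDihedral (ℝ × EvenSphere n) _ ⟨dihedralSmul n⟩ :=
  ⟨dihedralSmul_one, dihedralSmul_mul, fun _ _ => eq_one_of_dihedralSmul_eq_self,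
    properlyDiscontinuousSMul_dihedralSmul⟩

/-- for `n ≥ 1`, the map `(m, a) • (t, x) = (m + (−1)^a t, (−1)^a x)`
defines a group action of the infinite dihedral group `D_∞ = ℤ ⋊ ℤ/2` on `ℝ × S^{2n}`
which is free and properly discontinuous. -/
theorem stmt_9 (n : ℕ) (hn : 1 ≤ n) :
    (∀ p : ℝ × EvenSphere n, dihedralSmul n 1 p = p) ∧
    (∀ (a b : InfiniteDihedral) (p : ℝ × EvenSphere n),
      dihedralSmul n (a * b) p = dihedralSmul n a (dihedralSmul n b p)) ∧
    (∀ (g : InfiniteDihedral) (p : ℝ × EvenSphere n), dihedralSmul n g p = p → g = 1) ∧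
    @ProperlyDiscontinuousSMul InfiniteDihedral (ℝ × EvenSphere n) _ ⟨dihedralSmul n⟩ :=
  stmt_9_general n
end

section
/- Let m = 2k + r + s with k, r, s ≥ 0 and m ≥ 1, let F_m be the free group on generators x_1, …, x_m, and let θ be the automorphism of F_m defined by: θ(x_{2i−1}) = x_{2i} and θ(x_{2i}) = x_{2i−1} for 1 ≤ i ≤ k; θ(x_l) = x_l for 2k < l ≤ 2k + r; and θ(x_l) = x_l⁻¹ for 2k + r < l ≤ m. Let φ : F_m → ℤ/2 be a group homomorphism satisfying φ ∘ θ = φ. Then there exists no g ∈ F_m with θ(g) = g⁻¹ and φ(g) ≠ 0 if and only if φ(x_l) = 0 for all l with 2k + r < l ≤ m. -/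
private lemma prod_range_two_mul' {M : Type*} [CommMonoid M] (k : ℕ) (f : ℕ → M) :
    ∏ n ∈ Finset.range (2 * k), f n = ∏ i ∈ Finset.range k, (f (2 * i) * f (2 * i + 1)) := by
  induction k with
  | zero => simp
  | succ k ih =>
    have h2 : 2 * (k + 1) = 2 * k + 1 + 1 := by ring
    rw [h2, Finset.prod_range_succ, Finset.prod_range_succ, Finset.prod_range_succ, ih,
      mul_assoc]

/-- let `m = 2k + r + s`, `F_m` the free group on `x_1, …, x_m` (indexed here
by `Fin m`, with `x_{i+1}` corresponding to the index `i`), and `θ` the automorphism of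
`F_m` swapping `x_{2i−1} ↔ x_{2i}` for `1 ≤ i ≤ k`, fixing `x_l` for `2k < l ≤ 2k + r`,
and inverting `x_l` for `2k + r < l ≤ m`.  If `φ : F_m → ℤ/2` is a homomorphism with
`φ ∘ θ = φ`, then there is no `g ∈ F_m` with `θ(g) = g⁻¹` and `φ(g) ≠ 0` if and only if
`φ(x_l) = 0` for all `2k + r < l ≤ m`. -/
theorem stmt_14 (k r s m : ℕ) (hm : m = 2 * k + r + s) (hm1 : 1 ≤ m)
    (θ : FreeGroup (Fin m) ≃* FreeGroup (Fin m))
    (hθ₁ : ∀ i : ℕ, (hi : i < k) →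
      θ (FreeGroup.of ⟨2 * i, by omega⟩) = FreeGroup.of ⟨2 * i + 1, by omega⟩)
    (hθ₂ : ∀ i : ℕ, (hi : i < k) →
      θ (FreeGroup.of ⟨2 * i + 1, by omega⟩) = FreeGroup.of ⟨2 * i, by omega⟩)
    (hθ₃ : ∀ l : Fin m, 2 * k ≤ (l : ℕ) → (l : ℕ) < 2 * k + r →
      θ (FreeGroup.of l) = FreeGroup.of l)
    (hθ₄ : ∀ l : Fin m, 2 * k + r ≤ (l : ℕ) →
      θ (FreeGroup.of l) = (FreeGroup.of l)⁻¹)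
    (φ : FreeGroup (Fin m) →* Multiplicative (ZMod 2))
    (hφθ : ∀ g : FreeGroup (Fin m), φ (θ g) = φ g) :
    (¬ ∃ g : FreeGroup (Fin m), θ g = g⁻¹ ∧ φ g ≠ 1) ↔
      ∀ l : Fin m, 2 * k + r ≤ (l : ℕ) → φ (FreeGroup.of l) = 1 := by
  constructor
  · intro h l hl
    by_contra hne
    exact h ⟨FreeGroup.of l, hθ₄ l hl, hne⟩
  · intro hφ
    rintro ⟨g, hg, hgφ⟩
    apply hgφ
    -- exponent-count homomorphisms
    set c : Fin m → (FreeGroup (Fin m) →* Multiplicative ℤ) :=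
      fun j => FreeGroup.lift (fun i => if i = j then Multiplicative.ofAdd (1 : ℤ) else 1)
      with hc
    have hc_of : ∀ j i : Fin m,
        c j (FreeGroup.of i) = if i = j then Multiplicative.ofAdd (1 : ℤ) else 1 := by
      intro j i; simp [hc]
    set e : Fin m → ℤ := fun j => Multiplicative.toAdd (c j g) with he
    -- comparing c a ∘ θ with c b on generators
    have hkey : ∀ a b : Fin m, (a : ℕ) < 2 * k + r → (b : ℕ) < 2 * k + r →
        (∀ q : ℕ, q < k → ((2 * q + 1 = (a : ℕ)) ↔ (2 * q = (b : ℕ)))) →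
        (∀ q : ℕ, q < k → ((2 * q = (a : ℕ)) ↔ (2 * q + 1 = (b : ℕ)))) →
        (∀ l : Fin m, 2 * k ≤ (l : ℕ) → (l : ℕ) < 2 * k + r →
          (((l : Fin m) = a) ↔ ((l : Fin m) = b))) →
        (c a).comp θ.toMonoidHom = c b := by
      intro a b ha hb hiff1 hiff2 hiff3
      apply FreeGroup.ext_hom
      intro l
      simp only [MonoidHom.comp_apply, MulEquiv.coe_toMonoidHom]
      rcases Nat.lt_or_ge (l : ℕ) (2 * k) with hl | hl
      · rcases Nat.even_or_odd (l : ℕ) with ⟨q, hq2⟩ | ⟨q, hq2⟩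
        · have hqk : q < k := by omega
          have hleq : l = (⟨2 * q, by omega⟩ : Fin m) := Fin.ext (by simp only [Fin.val_mk]; omega)
          rw [hleq, hθ₁ q hqk, hc_of, hc_of]
          exact if_congr (by simp only [Fin.ext_iff]; exact hiff1 q hqk) rfl rfl
        · have hqk : q < k := by omega
          have hleq : l = (⟨2 * q + 1, by omega⟩ : Fin m) := Fin.ext (by simp only [Fin.val_mk]; omega)
          rw [hleq, hθ₂ q hqk, hc_of, hc_of]
          exact if_congr (by simp only [Fin.ext_iff]; exact hiff2 q hqk) rfl rfl
      · rcases Nat.lt_or_ge (l : ℕ) (2 * k + r) with hl2 | hl2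
        · rw [hθ₃ l hl hl2, hc_of, hc_of]
          exact if_congr (hiff3 l hl hl2) rfl rfl
        · rw [hθ₄ l hl2, map_inv, hc_of, hc_of,
            if_neg (by simp only [Fin.ext_iff, Fin.val_mk]; omega),
            if_neg (by simp only [Fin.ext_iff, Fin.val_mk]; omega), inv_one]
    -- middle region: e j = 0
    have hmid : ∀ j : Fin m, 2 * k ≤ (j : ℕ) → (j : ℕ) < 2 * k + r → e j = 0 := by
      intro j hj1 hj2
      have hcomp : (c j).comp θ.toMonoidHom = c j :=
        hkey j j hj2 hj2 (fun q hq => by omega) (fun q hq => by omega) (fun l _ _ => Iff.rfl)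
      have hce := DFunLike.congr_fun hcomp g
      simp only [MonoidHom.comp_apply, MulEquiv.coe_toMonoidHom] at hce
      rw [hg, map_inv] at hce
      have h2 : -(e j) = e j := by
        simpa [he] using congrArg Multiplicative.toAdd hce
      omega
    -- swap pairs: e (2i+1) = - e (2i)
    have hpair : ∀ i : ℕ, (hi : i < k) →
        e ⟨2 * i + 1, by omega⟩ = -(e ⟨2 * i, by omega⟩) := by
      intro i hik
      have hcomp : (c ⟨2 * i, by omega⟩).comp θ.toMonoidHom = c ⟨2 * i + 1, by omega⟩ := by
        apply hkey _ _ (by simp; omega) (by simp; omega)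
        · intro q hq; simp only [Fin.val_mk]; omega
        · intro q hq; simp only [Fin.val_mk]; omega
        · intro l hl1 hl2
          constructor
          · intro hEq; exfalso
            have := congrArg Fin.val hEq; simp only [Fin.val_mk] at this; omega
          · intro hEq; exfalso
            have := congrArg Fin.val hEq; simp only [Fin.val_mk] at this; omega
      have hce := DFunLike.congr_fun hcomp g
      simp only [MonoidHom.comp_apply, MulEquiv.coe_toMonoidHom] at hce
      rw [hg, map_inv] at hce
      simpa [he] using (congrArg Multiplicative.toAdd hce).symm
    -- φ on swap pairs
    have hφpair : ∀ i : ℕ, (hi : i < k) →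
        φ (FreeGroup.of ⟨2 * i + 1, by omega⟩) = φ (FreeGroup.of ⟨2 * i, by omega⟩) := by
      intro i hik
      have := hφθ (FreeGroup.of ⟨2 * i, by omega⟩)
      rwa [hθ₁ i hik] at this
    -- product formula for φ
    have hΦ : φ = ∏ j : Fin m, (zpowersHom _ (φ (FreeGroup.of j))).comp (c j) := by
      apply FreeGroup.ext_hom
      intro i
      rw [MonoidHom.finset_prod_apply]
      rw [Finset.prod_eq_single i]
      · simp [hc_of, zpowersHom_apply]
      · intro j _ hji
        simp [hc_of, zpowersHom_apply, Ne.symm hji]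
      · simp
    have hform : φ g = ∏ j : Fin m, φ (FreeGroup.of j) ^ (e j) := by
      conv_lhs => rw [hΦ]
      rw [MonoidHom.finset_prod_apply]
      exact Finset.prod_congr rfl fun j _ => by rw [MonoidHom.comp_apply, zpowersHom_apply]
    rw [hform]
    -- now split the product
    set F : ℕ → Multiplicative (ZMod 2) :=
      fun n => if h : n < m then φ (FreeGroup.of ⟨n, h⟩) ^ (e ⟨n, h⟩) else 1 with hF
    have hFval : ∀ j : Fin m, φ (FreeGroup.of j) ^ (e j) = F (j : ℕ) := by
      intro j
      simp only [hF]
      rw [dif_pos j.isLt]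
    calc ∏ j : Fin m, φ (FreeGroup.of j) ^ (e j)
        = ∏ n ∈ Finset.range m, F n := by
          rw [← Fin.prod_univ_eq_prod_range F m]
          exact Finset.prod_congr rfl fun j _ => hFval j
      _ = 1 := by
          have hsplit : m = 2 * k + (r + s) := by omega
          rw [hsplit, Finset.prod_range_add]
          have h1 : ∏ n ∈ Finset.range (2 * k), F n = 1 := by
            rw [prod_range_two_mul']
            apply Finset.prod_eq_one
            intro i hi
            rw [Finset.mem_range] at hi
            simp only [hF]
            rw [dif_pos (by omega : 2 * i < m), dif_pos (by omega : 2 * i + 1 < m)]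
            rw [hφpair i hi, hpair i hi, ← zpow_add]
            simp
          have h2 : ∏ n ∈ Finset.range (r + s), F (2 * k + n) = 1 := by
            apply Finset.prod_eq_one
            intro n hn
            rw [Finset.mem_range] at hn
            simp only [hF]
            rw [dif_pos (by omega : 2 * k + n < m)]
            rcases Nat.lt_or_ge n r with hnr | hnr
            · rw [hmid ⟨2 * k + n, by omega⟩ (by simp) (by simp; omega)]
              simp
            · rw [hφ ⟨2 * k + n, by omega⟩ (by simp; omega)]
              simp
          rw [h1, h2, one_mul]
end

section
/- Let D_∞ = ℤ ⋊ ℤ/2 be the infinite dihedral group and let N be a proper normal subgroup of D_∞ which is isomorphic to D_∞. Then N has index 2 in D_∞; in particular, the quotient D_∞ / N is isomorphic to ℤ/2. -/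
open Multiplicative SemidirectProduct

theorem SemidirectProduct.commute_of_right_eq_one {N G : Type*} [CommGroup N] [Group G]
    {φ : G →* MulAut N} {x y : N ⋊[φ] G} (hx : x.right = 1) (hy : y.right = 1) :
    Commute x y := by
  ext <;> simp [mul_left, mul_right, hx, hy, mul_comm]

theorem Multiplicative.zmod_two_eq_one_or (a : Multiplicative (ZMod 2)) :
    a = 1 ∨ a = ofAdd 1 := by
  revert a; decide

namespace InfiniteDihedral

theorem dihedralTwist_ofAdd_one (z : Multiplicative ℤ) :
    dihedralTwist (ofAdd 1) z = z⁻¹ := by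
  show (negAutZ ^ (1 : ZMod 2).val) z = z⁻¹
  rw [ZMod.val_one, pow_one]
  rfl

theorem dihedralTwist_ofAdd_one_symm (z : Multiplicative ℤ) :
    (dihedralTwist (ofAdd 1)).symm z = z⁻¹ := by
  rw [MulEquiv.symm_apply_eq, dihedralTwist_ofAdd_one, inv_inv]

theorem cast_toAdd_dihedralTwist (a : Multiplicative (ZMod 2)) (z : Multiplicative ℤ) :
    ((toAdd (dihedralTwist a z) : ℤ) : ZMod 2) = toAdd z := by
  rcases a.zmod_two_eq_one_or with rfl | rfl
  · simp
  · simp [dihedralTwist_ofAdd_one, ZMod.neg_eq_self_mod_two]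

def parityHom (c : ZMod 2) : InfiniteDihedral →* Multiplicative (ZMod 2) where
  toFun x := ofAdd (((toAdd (left x) : ℤ) : ZMod 2) + c * toAdd (right x))
  map_one' := by simp [one_left, one_right]
  map_mul' x y := by
    simp only [mul_left, mul_right, toAdd_mul, Int.cast_add, cast_toAdd_dihedralTwist]
    apply toAdd.injective
    simp only [toAdd_ofAdd, toAdd_mul]
    ring

theorem parityHom_apply (c : ZMod 2) (x : InfiniteDihedral) :
    parityHom c x = ofAdd (((toAdd (left x) : ℤ) : ZMod 2) + c * toAdd (right x)) := rfl

theorem parityHom_surjective (c : ZMod 2) : Function.Surjective (parityHom c) := by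
  intro a
  refine ⟨inl (ofAdd (toAdd a).val), ?_⟩
  simp [parityHom_apply]

theorem index_ker_parityHom (c : ZMod 2) : (parityHom c).ker.index = 2 := by
  rw [Subgroup.index_ker, (parityHom c).range_eq_top.mpr (parityHom_surjective c),
    Subgroup.card_top, Nat.card_eq_fintype_card]
  rfl

theorem not_commute_inl_inr :
    ¬ Commute (inl (ofAdd 1) : InfiniteDihedral) (inr (ofAdd 1)) := by
  intro h
  have := congrArg left h.eq
  simp only [mul_left, left_inl, left_inr, right_inl, right_inr, map_one,
    dihedralTwist_ofAdd_one, one_mul, mul_one] at this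
  exact absurd this (by decide)

theorem exists_mem_right_eq_ofAdd_one {N : Subgroup InfiniteDihedral}
    (e : N ≃* InfiniteDihedral) : ∃ g ∈ N, right g = ofAdd 1 := by
  by_contra! h
  have hright (x : N) : right (x : InfiniteDihedral) = 1 :=
    (right x.1).zmod_two_eq_one_or.resolve_right (h x x.2)
  have hcomm (x y : N) : Commute x y :=
    Subtype.ext (commute_of_right_eq_one (hright x) (hright y))
  exact not_commute_inl_inr (by simpa using (hcomm (e.symm _) (e.symm _)).map e)

theorem inl_ofAdd_two_eq_commutator {g : InfiniteDihedral} (hg : right g = ofAdd 1) :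
    inl (ofAdd 2) = inl (ofAdd 1) * g * (inl (ofAdd 1))⁻¹ * g⁻¹ := by
  ext
  · simp only [left_inl, toAdd_ofAdd, mul_left, right_inl, map_one, MulAut.one_apply, mul_right,
      hg, one_mul, inv_left, inv_one, dihedralTwist_ofAdd_one, inv_inv, inv_right, mul_one, map_inv,
      MulAut.inv_apply, dihedralTwist_ofAdd_one_symm, toAdd_mul, toAdd_inv]
    ring
  · simp [mul_right, hg]

theorem inl_ofAdd_two_mem {N : Subgroup InfiniteDihedral} [hN : N.Normal] {g : InfiniteDihedral}
    (hgN : g ∈ N) (hg : right g = ofAdd 1) : inl (ofAdd 2) ∈ N := by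
  rw [inl_ofAdd_two_eq_commutator hg]
  exact mul_mem (hN.conj_mem g hgN _) (inv_mem hgN)

theorem mem_of_mem_ker_parityHom_of_right_eq_one {N : Subgroup InfiniteDihedral}
    (h2 : inl (ofAdd 2) ∈ N) {c : ZMod 2} {x : InfiniteDihedral} (hx : x ∈ (parityHom c).ker)
    (hr : right x = 1) : x ∈ N := by
  obtain ⟨j, hj⟩ : (2 : ℤ) ∣ toAdd (left x) := by
    rw [MonoidHom.mem_ker, parityHom_apply, hr, toAdd_one, mul_zero, add_zero,
      ofAdd_eq_one] at hx
    exact (ZMod.intCast_zmod_eq_zero_iff_dvd _ 2).mp hx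
  have hx : x = inl (ofAdd 2) ^ j := by
    ext
    · simp [← map_zpow, hj, mul_comm]
    · simp [← map_zpow, hr]
  exact hx ▸ zpow_mem h2 j

theorem ker_parityHom_le {N : Subgroup InfiniteDihedral} [N.Normal] {g : InfiniteDihedral}
    (hgN : g ∈ N) (hg : right g = ofAdd 1) :
    (parityHom ((toAdd (left g) : ℤ) : ZMod 2)).ker ≤ N := by
  have h2 := inl_ofAdd_two_mem hgN hg
  have hgker : g ∈ (parityHom ((toAdd (left g) : ℤ) : ZMod 2)).ker := by
    rw [MonoidHom.mem_ker, parityHom_apply, hg, toAdd_ofAdd, mul_one, CharTwo.add_self_eq_zero,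
      ofAdd_zero]
  intro x hx
  rcases (right x).zmod_two_eq_one_or with hr | hr
  · exact mem_of_mem_ker_parityHom_of_right_eq_one h2 hx hr
  · have hxg := mem_of_mem_ker_parityHom_of_right_eq_one h2 (mul_mem hx (inv_mem hgker))
      (by simp [mul_right, hr, hg])
    simpa using mul_mem hxg hgN

end InfiniteDihedral

/-- a proper normal subgroup of `D_∞` which is isomorphic to `D_∞` has
index 2; in particular the quotient is isomorphic to `ℤ/2`. -/
theorem stmt_15 (N : Subgroup InfiniteDihedral) [N.Normal] (hproper : N ≠ ⊤)
    (hiso : Nonempty (N ≃* InfiniteDihedral)) :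
    N.index = 2 ∧ Nonempty ((InfiniteDihedral ⧸ N) ≃* Multiplicative (ZMod 2)) := by
  obtain ⟨e⟩ := hiso
  obtain ⟨g, hgN, hg⟩ := InfiniteDihedral.exists_mem_right_eq_ofAdd_one e
  have hdvd := Subgroup.index_dvd_of_le (InfiniteDihedral.ker_parityHom_le hgN hg)
  rw [InfiniteDihedral.index_ker_parityHom] at hdvd
  have hindex : N.index = 2 :=
    (Nat.prime_two.eq_one_or_self_of_dvd _ hdvd).resolve_left (mt Subgroup.index_eq_one.mp hproper)
  have hcard : Nat.card (InfiniteDihedral ⧸ N) = 2 := by rw [← Subgroup.index_eq_card, hindex]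
  exact ⟨hindex, ⟨mulEquivOfPrimeCardEq hcard (by simp)⟩⟩
end
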